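/- arXiv:1607.07132 — 3 statements merged into one kernel-verified Lean document; each statement's English description precedes it below -/
import Mathlib

section
/- For all positive integers m and n, χ₂(K_m □ K_n) ≥ n · H_m, where H_m = 1 + 1/2 + 1/3 + ⋯ + 1/m is the m-th harmonic number. -/
/-!
Fix a 2-ranking `f` with `χ₂` ranks and give each vertex the weight `1 / |rank class|`, so that the
total weight is the number of ranks used. Two vertices of equal rank lie in different rows and
columns, and the path of length two joining them through the column of `v` must rise above `f v`.
Hence if `v` is the `k`-th highest vertex of its column, its rank class has at most `k` elements,
and each of the `n` columns carries weight at least `H_m`.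
-/

/-- `f` is a 2-ranking of `G`: every path of length 1 or 2 is well-ranked, i.e. the
endpoints of each edge get distinct ranks, and whenever `u, w, v` is a path of length 2
whose endpoints `u, v` get equal ranks, the interior vertex `w` gets a higher rank. -/
def IsTwoRanking {V : Type*} (G : SimpleGraph V) (f : V → ℕ) : Prop :=
  (∀ u v, G.Adj u v → f u ≠ f v) ∧
  ∀ u v w, G.Adj u w → G.Adj w v → u ≠ v → f u = f v → f u < f w

/-- The 2-ranking number `χ₂(G)`: the least `n` such that `G` has a 2-ranking using
`n` ranks (ranks taken from `{0, …, n-1}`). -/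
noncomputable def twoRankingNumber {V : Type*} (G : SimpleGraph V) : ℕ :=
  sInf {n | ∃ f : V → ℕ, IsTwoRanking G f ∧ ∀ v, f v < n}

open Finset

section Fibers

variable {ι κ K : Type*} [Fintype ι] [DecidableEq κ] [DivisionRing K] [CharZero K]

lemma sum_one_div_card_fiber_eq_card_image (f : ι → κ) :
    ∑ i, (1 : K) / #{j | f j = f i} = #(univ.image f) := by
  rw [card_eq_sum_ones, Nat.cast_sum, Nat.cast_one]
  refine (sum_image' (s := univ) (g := f) (f := fun _ => (1 : K)) _ fun i _ => ?_).symm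
  have hfiber : ∀ j ∈ ({j | f j = f i} : Finset ι),
      (1 : K) / #{k | f k = f j} = 1 / #{k | f k = f i} := by
    intro j hj
    rw [(mem_filter.mp hj).2]
  have hpos : (#{j | f j = f i} : K) ≠ 0 := by exact_mod_cast (card_pos.mpr ⟨i, by simp⟩).ne'
  rw [sum_congr rfl hfiber, sum_const, nsmul_eq_mul, mul_one_div_cancel hpos]

end Fibers

section Harmonic

variable {ι α : Type*} [Fintype ι] [LinearOrder α] {g : ι → α}

lemma card_filter_lt_lt_card (i : ι) : #{j | g i < g j} < Fintype.card ι :=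
  card_lt_univ_of_notMem (x := i) (by simp)

lemma card_filter_lt_lt_of_lt {i j : ι} (h : g i < g j) : #{k | g j < g k} < #{k | g i < g k} :=
  card_lt_card <| (ssubset_iff_of_subset (monotone_filter_right _ fun _ _ => h.trans)).mpr
    ⟨j, by simp [h]⟩

lemma injective_card_filter_lt (hg : g.Injective) :
    Function.Injective fun i => #{j | g i < g j} := by
  intro i j hij
  by_contra hne
  rcases lt_or_gt_of_ne (hg.ne hne) with h | h
  · exact (card_filter_lt_lt_of_lt h).ne hij.symm
  · exact (card_filter_lt_lt_of_lt h).ne hij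

/-- Ranking the entries of `g` from the top, `i ↦ #{j | g i < g j}` is a bijection onto
`{0, …, card ι - 1}`. -/
lemma sum_comp_card_filter_lt {M : Type*} [AddCommMonoid M] (hg : g.Injective) (h : ℕ → M) :
    ∑ i, h #{j | g i < g j} = ∑ k ∈ range (Fintype.card ι), h k := by
  let rank : ι → Fin (Fintype.card ι) := fun i => ⟨_, card_filter_lt_lt_card (g := g) i⟩
  have hrank : rank.Bijective :=
    (Fintype.bijective_iff_injective_and_card rank).mpr
      ⟨fun i j hij => injective_card_filter_lt hg (Fin.val_injective.eq_iff.mpr hij),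
        Fintype.card_fin _ |>.symm⟩
  rw [← Fin.sum_univ_eq_sum_range]
  exact Fintype.sum_bijective rank hrank _ _ fun _ => rfl

lemma sum_range_one_div_le_sum_one_div {K : Type*} [Field K] [LinearOrder K]
    [IsStrictOrderedRing K] (hg : g.Injective) (b : ι → ℕ) (hb_pos : ∀ i, 0 < b i)
    (hb : ∀ i, b i ≤ #{j | g i < g j} + 1) :
    ∑ k ∈ range (Fintype.card ι), (1 : K) / (k + 1) ≤ ∑ i, (1 : K) / b i := by
  rw [← sum_comp_card_filter_lt hg]
  gcongr with i
  · exact_mod_cast hb_pos i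
  · exact_mod_cast hb i

end Harmonic

lemma IsTwoRanking.of_injective {V : Type*} (G : SimpleGraph V) {f : V → ℕ}
    (hf : f.Injective) : IsTwoRanking G f :=
  ⟨fun _ _ huv => hf.ne (G.ne_of_adj huv), fun _ _ _ _ _ huv heq => absurd (hf heq) huv⟩

lemma exists_isTwoRanking_lt_twoRankingNumber {V : Type*} [Finite V] (G : SimpleGraph V) :
    ∃ f : V → ℕ, IsTwoRanking G f ∧ ∀ v, f v < twoRankingNumber G := by
  have := Fintype.ofFinite V
  refine Nat.sInf_mem (s := {n | ∃ f : V → ℕ, IsTwoRanking G f ∧ ∀ v, f v < n})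
    ⟨Fintype.card V, fun v => Fintype.equivFin V v,
    IsTwoRanking.of_injective G ?_, fun v => (Fintype.equivFin V v).isLt⟩
  exact Fin.val_injective.comp (Fintype.equivFin V).injective

namespace IsTwoRanking

open SimpleGraph

variable {α β : Type*} {f : α × β → ℕ}
  (hf : IsTwoRanking ((⊤ : SimpleGraph α) □ (⊤ : SimpleGraph β)) f)
include hf

lemma injective_column (b : β) : Function.Injective fun a => f (a, b) := by
  intro a a' h
  by_contra hne
  exact hf.1 (a, b) (a', b) (Or.inl ⟨hne, rfl⟩) h

lemma fst_ne_and_snd_ne_of_eq {v w : α × β} (h : f v = f w) (hvw : v ≠ w) :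
    v.1 ≠ w.1 ∧ v.2 ≠ w.2 := by
  constructor
  · intro h1
    exact hf.1 v w (Or.inr ⟨fun h2 => hvw (Prod.ext h1 h2), h1⟩) h
  · intro h2
    exact hf.1 v w (Or.inl ⟨fun h1 => hvw (Prod.ext h1 h2), h2⟩) h

/-- For every other vertex `w` of the rank class of `v`, the vertex `(w.1, v.2)` is the middle of a
path of length two from `v` to `w`, so it ranks above `f v`; distinct `w` lie in distinct rows. -/
lemma card_rank_class_le [Fintype α] [Fintype β] [DecidableEq α] [DecidableEq β] (v : α × β) :
    #{w | f w = f v} ≤ #{a | f v < f (a, v.2)} + 1 := by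
  suffices #(({w | f w = f v} : Finset (α × β)).erase v) ≤ #{a | f v < f (a, v.2)} by
    rw [card_erase_of_mem (by simp)] at this
    omega
  refine card_le_card_of_injOn Prod.fst (fun w hw => ?_) (fun w hw w' hw' h => ?_)
  · simp only [coe_erase, coe_filter, mem_univ, true_and, Set.mem_sdiff, Set.mem_ofPred_eq,
      Set.mem_singleton_iff] at hw
    obtain ⟨hfw, hwv⟩ := hw
    obtain ⟨h1, h2⟩ := hf.fst_ne_and_snd_ne_of_eq hfw hwv
    simpa using hf.2 v w (w.1, v.2) (Or.inl ⟨Ne.symm h1, rfl⟩) (Or.inr ⟨Ne.symm h2, rfl⟩)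
      (Ne.symm hwv) hfw.symm
  · simp only [coe_erase, coe_filter, mem_univ, true_and, Set.mem_sdiff, Set.mem_ofPred_eq,
      Set.mem_singleton_iff] at hw hw'
    by_contra hne
    exact (hf.fst_ne_and_snd_ne_of_eq (hw.1.trans hw'.1.symm) hne).1 h

end IsTwoRanking

open SimpleGraph in
theorem twoRankingNumber_boxProd_complete_ge_harmonic_general (m n : ℕ) :
    (n : ℝ) * (∑ i ∈ Finset.range m, (1 : ℝ) / (i + 1)) ≤
      (twoRankingNumber ((⊤ : SimpleGraph (Fin m)) □ (⊤ : SimpleGraph (Fin n))) : ℝ) := by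
  obtain ⟨f, hf, hlt⟩ := exists_isTwoRanking_lt_twoRankingNumber
    ((⊤ : SimpleGraph (Fin m)) □ (⊤ : SimpleGraph (Fin n)))
  have hcolumn (b : Fin n) :
      ∑ k ∈ range m, (1 : ℝ) / (k + 1) ≤ ∑ a, (1 : ℝ) / #{w | f w = f (a, b)} := by
    simpa using sum_range_one_div_le_sum_one_div (K := ℝ) (hf.injective_column b)
      (fun a => #{w | f w = f (a, b)}) (fun a => card_pos.mpr ⟨(a, b), by simp⟩)
      (fun a => hf.card_rank_class_le (a, b))
  have himage : #(univ.image f) ≤ twoRankingNumber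
      ((⊤ : SimpleGraph (Fin m)) □ (⊤ : SimpleGraph (Fin n))) := by
    simpa using card_le_card (image_subset_iff.mpr fun v _ => mem_range.mpr (hlt v))
  calc (n : ℝ) * ∑ k ∈ range m, (1 : ℝ) / (k + 1)
      = ∑ _b : Fin n, ∑ k ∈ range m, (1 : ℝ) / (k + 1) := by simp
    _ ≤ ∑ b : Fin n, ∑ a, (1 : ℝ) / #{w | f w = f (a, b)} := sum_le_sum fun b _ => hcolumn b
    _ = ∑ v, (1 : ℝ) / #{w | f w = f v} := by rw [Fintype.sum_prod_type_right]
    _ = #(univ.image f) := sum_one_div_card_fiber_eq_card_image f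
    _ ≤ _ := by exact_mod_cast himage

open SimpleGraph in
/-- `χ₂(K_m □ K_n) ≥ n · H_m`, where `H_m = 1 + 1/2 + ⋯ + 1/m` is the harmonic number. -/
theorem twoRankingNumber_boxProd_complete_ge_harmonic (m n : ℕ) (hm : 0 < m) (hn : 0 < n) :
    (n : ℝ) * (∑ i ∈ Finset.range m, (1 : ℝ) / (i + 1)) ≤
      (twoRankingNumber ((⊤ : SimpleGraph (Fin m)) □ (⊤ : SimpleGraph (Fin n))) : ℝ) :=
  twoRankingNumber_boxProd_complete_ge_harmonic_general m n
end

section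
/- For every integer n ≥ 24, the 2-ranking number satisfies χ₂(C₃ □ C_n) ≤ 6. -/
/-!
A 2-ranking only sees paths with at most two edges, so it pulls back along any graph
homomorphism that is injective on every neighbourhood. Let `H` be a pentagon and a square
glued at one vertex. For `n = 5k + 4l` with `k, l ≥ 1` (every `n ≥ 24` is of this form), going
`k` times around the pentagon and then `l` times around the square is a closed walk of length
`n` that never backtracks, i.e. a locally injective homomorphism `C_n → H`; hence
`C₃ □ C_n → C₃ □ H` is locally injective as well. The 24-vertex graph `C₃ □ H` has an explicit
2-ranking with ranks `0, …, 5`, checked by computation.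
-/

open Function Fin.NatCast

namespace SimpleGraph

variable {α β γ δ : Type*} {G : SimpleGraph α} {G' : SimpleGraph β}
  {H : SimpleGraph γ} {H' : SimpleGraph δ}

def Hom.IsLocallyInjective (φ : G →g G') : Prop :=
  ∀ v, Set.InjOn φ (G.neighborSet v)

theorem Hom.isLocallyInjective_id : (Hom.id : G →g G).IsLocallyInjective :=
  fun _ => injective_id.injOn

instance [DecidableEq α] [DecidableEq γ] [DecidableRel G.Adj] [DecidableRel H.Adj] :
    DecidableRel (G □ H).Adj :=
  fun _ _ => decidable_of_iff' _ boxProd_adj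

def Hom.boxProd (f : G →g G') (g : H →g H') : (G □ H) →g (G' □ H') where
  toFun := Prod.map f g
  map_rel' := by
    rintro ⟨a₁, b₁⟩ ⟨a₂, b₂⟩ (⟨ha, hb⟩ | ⟨hb, ha⟩)
    · exact Or.inl ⟨f.map_adj ha, congrArg g hb⟩
    · exact Or.inr ⟨g.map_adj hb, congrArg f ha⟩

theorem Hom.IsLocallyInjective.boxProd {f : G →g G'} {g : H →g H'}
    (hf : f.IsLocallyInjective) (hg : g.IsLocallyInjective) :
    (Hom.boxProd f g).IsLocallyInjective := by
  rintro ⟨a, b⟩ ⟨a₁, b₁⟩ h₁ ⟨a₂, b₂⟩ h₂ heq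
  simp only [Hom.boxProd, RelHom.coeFn_mk, Prod.map, Prod.mk.injEq] at heq
  simp only [mem_neighborSet, boxProd_adj] at h₁ h₂
  rcases h₁ with ⟨ha₁, rfl⟩ | ⟨hb₁, rfl⟩ <;> rcases h₂ with ⟨ha₂, rfl⟩ | ⟨hb₂, rfl⟩
  · rw [hf a ha₁ ha₂ heq.1]
  · exact absurd heq.1 (f.map_adj ha₁).ne'
  · exact absurd heq.1 (f.map_adj ha₂).ne
  · rw [hg b hb₁ hb₂ heq.2]

end SimpleGraph

open SimpleGraph

variable {V W : Type*} {G : SimpleGraph V} {H : SimpleGraph W}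

theorem IsTwoRanking.comp {f : W → ℕ} (hf : IsTwoRanking H f) {φ : G →g H}
    (hφ : φ.IsLocallyInjective) : IsTwoRanking G (f ∘ φ) :=
  ⟨fun _ _ huv => hf.1 _ _ (φ.map_adj huv),
    fun _ _ w huw hwv huv => hf.2 _ _ _ (φ.map_adj huw) (φ.map_adj hwv)
      ((hφ w).ne huw.symm hwv huv)⟩

theorem twoRankingNumber_le {f : V → ℕ} (hf : IsTwoRanking G f) {k : ℕ} (hk : ∀ v, f v < k) :
    twoRankingNumber G ≤ k :=
  Nat.sInf_le ⟨f, hf, hk⟩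

theorem Function.Periodic.map_eq_of_modEq {f : ℕ → V} {n x y : ℕ} (hf : Periodic f n)
    (h : x ≡ y [MOD n]) : f x = f y := by
  rw [← hf.map_mod_nat x, ← hf.map_mod_nat y, h]

section PeriodicAppend

def periodicAppend (a : ℕ → V) (p : ℕ) (b : ℕ → V) (q : ℕ) (j : ℕ) : V :=
  if j % (p + q) < p then a (j % (p + q)) else b (j % (p + q) - p)

variable {a b : ℕ → V} {p q : ℕ}

theorem periodic_periodicAppend (a : ℕ → V) (p : ℕ) (b : ℕ → V) (q : ℕ) :
    Periodic (periodicAppend a p b q) (p + q) := by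
  intro j
  simp only [periodicAppend, Nat.add_mod_right]

theorem periodicAppend_of_le (ha : Periodic a p) (h₀ : a 0 = b 0) (hq : 0 < q) {j : ℕ}
    (hj : j ≤ p) : periodicAppend a p b q j = a j := by
  rw [periodicAppend, Nat.mod_eq_of_lt (by omega : j < p + q)]
  rcases hj.lt_or_eq with hj | rfl
  · rw [if_pos hj]
  · rw [if_neg (lt_irrefl j), Nat.sub_self, ← h₀, ha.eq]

theorem periodicAppend_of_ge (hb : Periodic b q) (h₀ : a 0 = b 0) {j : ℕ} (hpj : p ≤ j)
    (hj : j ≤ p + q) : periodicAppend a p b q j = b (j - p) := by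
  rcases hj.lt_or_eq with hj | rfl
  · rw [periodicAppend, Nat.mod_eq_of_lt hj, if_neg (by omega)]
  · rw [periodicAppend, Nat.mod_self, Nat.add_sub_cancel_left, hb.eq]
    split_ifs <;> simp [h₀]

end PeriodicAppend

namespace SimpleGraph

/-- A closed walk of length `n` in `H`, encoded as an `n`-periodic sequence of vertices, that
never backtracks, not even across its starting point. -/
structure IsClosedNonbacktrackingWalk (H : SimpleGraph W) (c : ℕ → W) (n : ℕ) : Prop where
  periodic : Periodic c n
  adj : ∀ j, H.Adj (c j) (c (j + 1))
  ne : ∀ j, c j ≠ c (j + 2)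

namespace IsClosedNonbacktrackingWalk

variable {a b c : ℕ → W} {n p q : ℕ}

theorem of_forall_lt (hc : Periodic c n) (hn : 0 < n) (hadj : ∀ j < n, H.Adj (c j) (c (j + 1)))
    (hne : ∀ j < n, c j ≠ c (j + 2)) : H.IsClosedNonbacktrackingWalk c n where
  periodic := hc
  adj j := by
    simpa only [hc.map_mod_nat, hc.map_eq_of_modEq ((Nat.mod_modEq j n).add_right 1)] using
      hadj (j % n) (Nat.mod_lt j hn)
  ne j := by
    simpa only [hc.map_mod_nat, hc.map_eq_of_modEq ((Nat.mod_modEq j n).add_right 2)] using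
      hne (j % n) (Nat.mod_lt j hn)

theorem nat_mul (hc : H.IsClosedNonbacktrackingWalk c n) (k : ℕ) :
    H.IsClosedNonbacktrackingWalk c (k * n) :=
  { hc with periodic := hc.periodic.nat_mul k }

theorem of_fin {m : ℕ} [NeZero m] {f : Fin m → W}
    (hf : ∀ r, H.Adj (f r) (f (r + 1)) ∧ f r ≠ f (r + 2)) :
    H.IsClosedNonbacktrackingWalk (fun j : ℕ => f j) m where
  periodic j := by simp
  adj j := by simpa using (hf j).1
  ne j := by simpa using (hf j).2

theorem exists_hom_cycleGraph (hc : H.IsClosedNonbacktrackingWalk c n) (hn : 2 ≤ n) :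
    ∃ φ : cycleGraph n →g H, φ.IsLocallyInjective := by
  obtain ⟨m, rfl⟩ := Nat.exists_eq_add_of_le' hn
  have hshift (i : Fin (m + 2)) (k : ℕ) : c (i + k : Fin (m + 2)) = c (i + k) := by
    refine hc.periodic.map_eq_of_modEq ?_
    simp [Nat.ModEq, Fin.val_add, Nat.add_mod]
  have hadj (i : Fin (m + 2)) : H.Adj (c i) (c (i + 1 : Fin (m + 2))) := by
    rw [← Nat.cast_one, hshift]
    exact hc.adj i
  refine ⟨⟨fun i => c i, fun {u v} huv => ?_⟩, fun w => ?_⟩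
  · rcases huv with h | h
    · rw [sub_eq_iff_eq_add'.mp h]
      exact (hadj v).symm
    · rw [sub_eq_iff_eq_add'.mp h]
      exact hadj u
  · rw [cycleGraph_neighborSet, Set.injOn_pair]
    intro h
    refine absurd h ?_
    have hw : w + 1 = w - 1 + ((1 + 1 : ℕ) : Fin (m + 2)) := by
      simp only [Nat.cast_add, Nat.cast_one]
      abel
    simp only [RelHom.coeFn_mk]
    rw [hw, hshift]
    exact hc.ne _

theorem append (ha : H.IsClosedNonbacktrackingWalk a p)
    (hb : H.IsClosedNonbacktrackingWalk b q) (hp : 0 < p) (hq : 0 < q) (h₀ : a 0 = b 0)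
    (hab : a (p - 1) ≠ b 1) (hba : b (q - 1) ≠ a 1) :
    H.IsClosedNonbacktrackingWalk (periodicAppend a p b q) (p + q) := by
  have hA : ∀ j ≤ p, periodicAppend a p b q j = a j := fun j hj =>
    periodicAppend_of_le ha.periodic h₀ hq hj
  have hB : ∀ j, p ≤ j → j ≤ p + q → periodicAppend a p b q j = b (j - p) := fun j hpj hj =>
    periodicAppend_of_ge hb.periodic h₀ hpj hj
  refine of_forall_lt (periodic_periodicAppend a p b q) (by omega) (fun j hj => ?_) (fun j hj => ?_)
  · rcases lt_or_ge j p with hjp | hjp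
    · rw [hA j hjp.le, hA (j + 1) hjp]
      exact ha.adj j
    · rw [hB j hjp hj.le, hB (j + 1) (by omega) hj, Nat.sub_add_comm hjp]
      exact hb.adj _
  · obtain h | rfl | h | rfl :
        j + 2 ≤ p ∨ j = p - 1 ∨ p ≤ j ∧ j + 2 ≤ p + q ∨ j = p + q - 1 := by omega
    · rw [hA j (by omega), hA (j + 2) h]
      exact ha.ne j
    · rw [hA (p - 1) (by omega), hB (p - 1 + 2) (by omega) (by omega),
        show p - 1 + 2 - p = 1 by omega]
      exact hab
    · rw [hB j h.1 (by omega), hB (j + 2) (by omega) h.2, show j + 2 - p = j - p + 2 by omega]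
      exact hb.ne _
    · rw [hB (p + q - 1) (by omega) (by omega), show p + q - 1 + 2 = 1 + (p + q) by omega,
        periodic_periodicAppend, hA 1 hp, show p + q - 1 - p = q - 1 by omega]
      exact hba

end IsClosedNonbacktrackingWalk

end SimpleGraph

namespace FigureEight

def graph : SimpleGraph (Fin 8) :=
  fromEdgeSet ↑({s(0, 1), s(1, 2), s(2, 3), s(3, 0), s(0, 4), s(4, 5), s(5, 6), s(6, 7), s(7, 0)} :
    Finset (Sym2 (Fin 8)))

instance : DecidableRel graph.Adj := inferInstanceAs (DecidableRel (fromEdgeSet _).Adj)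

def square : Fin 4 → Fin 8 := ![0, 1, 2, 3]

def pentagon : Fin 5 → Fin 8 := ![0, 4, 5, 6, 7]

theorem isClosedNonbacktrackingWalk_square :
    graph.IsClosedNonbacktrackingWalk (fun j : ℕ => square j) 4 :=
  .of_fin (by decide)

theorem isClosedNonbacktrackingWalk_pentagon :
    graph.IsClosedNonbacktrackingWalk (fun j : ℕ => pentagon j) 5 :=
  .of_fin (by decide)

theorem exists_isClosedNonbacktrackingWalk {k l : ℕ} (hk : 0 < k) (hl : 0 < l) :
    ∃ c, graph.IsClosedNonbacktrackingWalk c (k * 5 + l * 4) := by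
  refine ⟨_, (isClosedNonbacktrackingWalk_pentagon.nat_mul k).append
    (isClosedNonbacktrackingWalk_square.nat_mul l) (by omega) (by omega) rfl ?_ ?_⟩
  · rw [isClosedNonbacktrackingWalk_pentagon.periodic.map_eq_of_modEq
      (show k * 5 - 1 ≡ 4 [MOD 5] by unfold Nat.ModEq; omega)]
    decide
  · rw [isClosedNonbacktrackingWalk_square.periodic.map_eq_of_modEq
      (show l * 4 - 1 ≡ 3 [MOD 4] by unfold Nat.ModEq; omega)]
    decide

def ranking : Fin 3 × Fin 8 → ℕ := fun v =>
  ![![1, 0, 3, 0, 4, 0, 1, 5], ![2, 4, 0, 5, 0, 3, 4, 0], ![3, 2, 1, 4, 1, 5, 2, 1]] v.1 v.2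

set_option synthInstance.maxSize 1000 in
theorem isTwoRanking_ranking : IsTwoRanking (cycleGraph 3 □ graph) ranking := by
  constructor <;> decide

theorem ranking_lt_six : ∀ v, ranking v < 6 := by
  decide

end FigureEight

theorem exists_eq_mul_five_add_mul_four {n : ℕ} (hn : 24 ≤ n) :
    ∃ k l, 0 < k ∧ 0 < l ∧ n = k * 5 + l * 4 :=
  ⟨(n + 3) % 4 + 1, (n - 5 * ((n + 3) % 4 + 1)) / 4, by omega, by omega, by omega⟩

open SimpleGraph in
/-- For every `n ≥ 24`, `χ₂(C₃ □ C_n) ≤ 6`. -/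
theorem twoRankingNumber_triangle_cycle_le_six (n : ℕ) (hn : 24 ≤ n) :
    twoRankingNumber (cycleGraph 3 □ cycleGraph n) ≤ 6 := by
  obtain ⟨k, l, hk, hl, rfl⟩ := exists_eq_mul_five_add_mul_four hn
  obtain ⟨c, hc⟩ := FigureEight.exists_isClosedNonbacktrackingWalk hk hl
  obtain ⟨φ, hφ⟩ := hc.exists_hom_cycleGraph (by omega)
  exact twoRankingNumber_le
    (FigureEight.isTwoRanking_ranking.comp (Hom.isLocallyInjective_id.boxProd hφ))
    fun _ => FigureEight.ranking_lt_six _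
end

section
/- For every even integer n with n ≥ 4, the 2-ranking number satisfies χ₂(C₃ □ C_n) ≤ 5. -/
open SimpleGraph Function

section

variable {V W : Type*}

theorem isTwoRanking_of_injective (G : SimpleGraph V) {f : V → ℕ} (hf : Injective f) :
    IsTwoRanking G f :=
  ⟨fun _ _ h => hf.ne h.ne, fun _ _ _ _ _ huv hf' => absurd (hf hf') huv⟩

/-- For ranks `a`, `b` of two adjacent copies of `H` in a box product: the 2-paths from `w` in
the first copy to a neighbour `w'` in the second are well-ranked. -/
def TwoRankingCompatible (H : SimpleGraph W) (a b : W → ℕ) : Prop :=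
  ∀ w w', H.Adj w w' → a w = b w' → a w < a w' ∧ a w < b w

theorem TwoRankingCompatible.symm {H : SimpleGraph W} {a b : W → ℕ}
    (h : TwoRankingCompatible H a b) : TwoRankingCompatible H b a := by
  intro w w' hww' hba
  obtain ⟨h₁, h₂⟩ := h w' w hww'.symm hba.symm
  exact ⟨hba ▸ h₂, hba ▸ h₁⟩

theorem isTwoRanking_boxProd {H : SimpleGraph W} {G : SimpleGraph V} {f : W × V → ℕ}
    (hcol : ∀ v, IsTwoRanking H fun w => f (w, v))
    (hrow : ∀ w, IsTwoRanking G fun v => f (w, v))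
    (hcompat : ∀ v v', G.Adj v v' →
      TwoRankingCompatible H (fun w => f (w, v)) (fun w => f (w, v'))) :
    IsTwoRanking (H □ G) f := by
  refine ⟨fun ⟨a, b⟩ ⟨a', b'⟩ h => ?_, fun ⟨a, b⟩ ⟨a'', b''⟩ ⟨a', b'⟩ h₁ h₂ huv => ?_⟩
  · simp only [boxProd_adj] at h
    rcases h with ⟨h, rfl⟩ | ⟨h, rfl⟩
    · exact (hcol b).1 a a' h
    · exact (hrow a).1 b b' h
  · simp only [boxProd_adj] at h₁ h₂
    rcases h₁ with ⟨h₁, rfl⟩ | ⟨h₁, rfl⟩ <;> rcases h₂ with ⟨h₂, rfl⟩ | ⟨h₂, rfl⟩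
    · exact (hcol b).2 a a'' a' h₁ h₂ fun h => huv (by rw [h])
    · exact fun h => (hcompat b b'' h₂ a a' h₁ h).1
    · exact fun h => (hcompat b b' h₁ a a'' h₂ h).2
    · exact (hrow a).2 b b'' b' h₁ h₂ fun h => huv (by rw [h])

theorem modEq_succ_of_cycleGraph_adj {n : ℕ} {u v : Fin n} (h : (cycleGraph n).Adj u v) :
    v.val ≡ u.val + 1 [MOD n] ∨ u.val ≡ v.val + 1 [MOD n] := by
  have key : ∀ x y : Fin n, (x - y).val = 1 → x.val ≡ y.val + 1 [MOD n] := by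
    intro x y hxy
    rcases le_or_gt y x with hle | hlt
    · rw [Fin.sub_val_of_le hle] at hxy
      rw [show x.val = y.val + 1 by omega]
    · rw [Fin.coe_sub_iff_lt.mpr hlt] at hxy
      rw [Nat.ModEq, show y.val + 1 = x.val + n by omega, Nat.add_mod_right]
  rcases cycleGraph_adj'.mp h with h | h
  · exact .inr (key u v h)
  · exact .inl (key v u h)

theorem Function.Periodic.eq_of_modEq {α : Type*} {s : ℕ → α} {n : ℕ} (hs : Periodic s n)
    {i j : ℕ} (h : i ≡ j [MOD n]) : s i = s j := by
  rw [← hs.map_mod_nat i, ← hs.map_mod_nat j, h]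

theorem isTwoRanking_cycleGraph_of_periodic {n : ℕ} {s : ℕ → ℕ} (hs : Periodic s n)
    (hne : ∀ j, s j ≠ s (j + 1)) (hlt : ∀ j, s j = s (j + 2) → s j < s (j + 1)) :
    IsTwoRanking (cycleGraph n) fun v => s v := by
  refine ⟨fun u v h huv => ?_, fun u v w huw hwv huv => ?_⟩
  · rcases modEq_succ_of_cycleGraph_adj h with h | h
    · exact hne u (huv.trans (hs.eq_of_modEq h))
    · exact hne v (huv.symm.trans (hs.eq_of_modEq h))
  · dsimp only
    rcases modEq_succ_of_cycleGraph_adj huw with h₁ | h₁ <;>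
      rcases modEq_succ_of_cycleGraph_adj hwv with h₂ | h₂
    · rw [hs.eq_of_modEq h₁, hs.eq_of_modEq (h₂.trans (h₁.add_right 1))]
      exact hlt u
    · exact absurd (Fin.ext (Nat.ModEq.eq_of_lt_of_lt
        ((h₁.symm.trans h₂).add_right_cancel' 1) u.isLt v.isLt)) huv
    · exact absurd (Fin.ext (Nat.ModEq.eq_of_lt_of_lt (h₁.trans h₂.symm) u.isLt v.isLt)) huv
    · rw [hs.eq_of_modEq h₂, hs.eq_of_modEq (h₁.trans (h₂.add_right 1))]
      intro h
      rw [h]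
      exact hlt v h.symm

theorem isTwoRanking_boxProd_cycleGraph {H : SimpleGraph W} {n : ℕ} {c : ℕ → W → ℕ}
    (hc : Periodic c n) (hcol : ∀ j, IsTwoRanking H (c j)) (hne : ∀ j w, c j w ≠ c (j + 1) w)
    (hlt : ∀ j w, c j w = c (j + 2) w → c j w < c (j + 1) w)
    (hcompat : ∀ j, TwoRankingCompatible H (c j) (c (j + 1))) :
    IsTwoRanking (H □ cycleGraph n) fun p => c p.2 p.1 := by
  refine isTwoRanking_boxProd (fun v => hcol v) (fun w => ?_) fun v v' h => ?_
  · exact isTwoRanking_cycleGraph_of_periodic (s := fun j => c j w) (fun j => congrFun (hc j) w)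
      (fun j => hne j w) (fun j => hlt j w)
  · show TwoRankingCompatible H (c v) (c v')
    rcases modEq_succ_of_cycleGraph_adj h with h | h
    · exact hc.eq_of_modEq h ▸ hcompat v
    · exact (hc.eq_of_modEq h ▸ hcompat v').symm

end

def triangleColumn : Fin 8 → Fin 3 → ℕ :=
  ![![0, 1, 2], ![3, 0, 4], ![0, 2, 1], ![4, 0, 3], ![1, 2, 0], ![0, 4, 3], ![2, 0, 1], ![4, 3, 0]]

def ColumnStep (a b : Fin 8) : Prop := a ≠ 3 ∧ b = a + 1 ∨ a = 1 ∧ b = 4 ∨ a = 3 ∧ b = 0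

/-- Letter `j mod n` of the cyclic word `(0123)^k` if `n = 4k`, and of `(0123)^k 01 4567` if
`n = 4k + 6`. -/
def columnIndex (n j : ℕ) : Fin 8 :=
  if n % 4 = 2 ∧ n - 4 ≤ j % n then Fin.ofNat 8 (j % n + 8 - n) else Fin.ofNat 8 (j % n % 4)

theorem columnIndex_periodic (n : ℕ) : Periodic (columnIndex n) n := by
  intro j
  simp only [columnIndex, Nat.add_mod_right]

theorem columnIndex_step {n : ℕ} (hn : 4 ≤ n) (heven : Even n) (j : ℕ) :
    ColumnStep (columnIndex n j) (columnIndex n (j + 1)) := by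
  obtain ⟨k, rfl⟩ := heven
  have hj : j % (k + k) < k + k := Nat.mod_lt _ (by omega)
  have hsucc : j % (k + k) + 1 < k + k ∧ (j + 1) % (k + k) = j % (k + k) + 1 ∨
      j % (k + k) + 1 = k + k ∧ (j + 1) % (k + k) = 0 := by
    rw [← Nat.mod_add_mod]
    rcases (by omega : j % (k + k) + 1 < k + k ∨ j % (k + k) + 1 = k + k) with h | h
    · exact .inl ⟨h, Nat.mod_eq_of_lt h⟩
    · exact .inr ⟨h, by rw [h, Nat.mod_self]⟩
  unfold ColumnStep columnIndex
  generalize j % (k + k) = i at *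
  generalize (j + 1) % (k + k) = i' at *
  split_ifs <;> simp only [ne_eq, Fin.ext_iff, Fin.val_add, Fin.ofNat_eq_cast, Fin.val_natCast,
    Fin.isValue, Fin.coe_ofNat_eq_mod, Nat.reduceMod] <;> omega

theorem triangleColumn_injective : ∀ a, Injective (triangleColumn a) := by
  decide

theorem triangleColumn_lt_five : ∀ a w, triangleColumn a w < 5 := by
  decide

theorem triangleColumn_ne_of_step :
    ∀ a b, ColumnStep a b → ∀ w, triangleColumn a w ≠ triangleColumn b w := by
  unfold ColumnStep
  decide

theorem triangleColumn_lt_of_step_step : ∀ a b c, ColumnStep a b → ColumnStep b c →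
    ∀ w, triangleColumn a w = triangleColumn c w → triangleColumn a w < triangleColumn b w := by
  unfold ColumnStep
  decide

theorem twoRankingCompatible_triangleColumn :
    ∀ a b, ColumnStep a b → TwoRankingCompatible ⊤ (triangleColumn a) (triangleColumn b) := by
  unfold ColumnStep TwoRankingCompatible
  decide

open SimpleGraph in
/-- For every even `n ≥ 4`, `χ₂(C₃ □ C_n) ≤ 5`. -/
theorem twoRankingNumber_triangle_cycle_le_five (n : ℕ) (hn : 4 ≤ n) (heven : Even n) :
    twoRankingNumber (cycleGraph 3 □ cycleGraph n) ≤ 5 := by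
  have step := columnIndex_step hn heven
  rw [cycleGraph_three_eq_top]
  refine Nat.sInf_le ⟨fun p => triangleColumn (columnIndex n p.2) p.1, ?_,
    fun p => triangleColumn_lt_five _ _⟩
  exact isTwoRanking_boxProd_cycleGraph (c := fun j => triangleColumn (columnIndex n j))
    (fun j => congrArg triangleColumn (columnIndex_periodic n j))
    (fun _ => isTwoRanking_of_injective ⊤ (triangleColumn_injective _))
    (fun j => triangleColumn_ne_of_step _ _ (step j))
    (fun j => triangleColumn_lt_of_step_step _ _ _ (step j) (step (j + 1)))
    (fun j => twoRankingCompatible_triangleColumn _ _ (step j))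
end
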